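/- arXiv:1910.02799 — 2 statements merged into one kernel-verified Lean document; each statement's English description precedes it below -/
import Mathlib

section
/- Caccioppoli inequality for ancient solutions of the continuous-time heat equation on a graph: there is a universal constant C such that for any ancient solution u : V × (−∞, 0] → ℝ of ∂_t u = Δu and any R ≥ s (the jump size of the intrinsic metric), R²·∫_{Q_R} Γ(u) + R⁴·∫_{Q_R} (∂_t u)² ≤ C·∫_{Q_{9R}} u², where Q_r = B_r(x₀) × [−r², 0] and ∫_{Q_r} v := ∫_{−r²}^0 ∑_{x ∈ B_r} v(x,t) m_x dt. -/
/-!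
Energy method with two cutoffs. Let `η₁` be `1` on `B_{3R}` and `0` outside `B_{4R}`, and `η₂` be
`1` on `B_R` and `0` outside `B_{2R}`, both `1/R`-Lipschitz for `ρ`. Differentiating
`E = ∑ η₁² u² m` and summing by parts, the intrinsic bound `∑_y w ρ² ≤ m` turns the commutator with
`η₁` into a mass term: `E' + ½ ∑ w η₁² |∇u|² ≤ 2R⁻² ∑ u² m`. Likewise, with
`G = ∑ w min(η₂ x, η₂ y)² |∇u|²` and `∂ₜu = Δu`, summation by parts gives
`½ ∑ η₂² (Δu)² m + G'/4 ≤ R⁻² ∑ w η₁² |∇u|²`. Each inequality is integrated in time from a moment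
at which `E` (resp. `G`) is at most its time average, so no initial data enter. Since the jump size
is at most `R`, all neighbours of `B_{4R}` lie in `B_{9R}`, where every sum may be taken.
-/

open MeasureTheory Set

section Calculus

variable {f f' g h : ℝ → ℝ} {a b c : ℝ}

theorem exists_mul_le_setIntegral_Icc (hab : a ≤ b) (hf : ContinuousOn f (Icc a b)) :
    ∃ t ∈ Icc a b, f t * (b - a) ≤ ∫ s in Icc a b, f s := by
  obtain ⟨t, ht, hmin⟩ := isCompact_Icc.exists_isMinOn (nonempty_Icc.2 hab) hf
  refine ⟨t, ht, ?_⟩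
  calc f t * (b - a) = ∫ _ in Icc a b, f t := by
        rw [setIntegral_const, Real.volume_real_Icc_of_le hab, smul_eq_mul, mul_comm]
    _ ≤ ∫ s in Icc a b, f s :=
        setIntegral_mono_on (integrableOn_const measure_Icc_lt_top.ne) hf.integrableOn_Icc
          measurableSet_Icc hmin

theorem setIntegral_Icc_mono_set (hf : ContinuousOn f (Icc a c)) (hf0 : ∀ t ∈ Icc a c, 0 ≤ f t)
    {a' c' : ℝ} (ha : a ≤ a') (hc : c' ≤ c) : ∫ t in Icc a' c', f t ≤ ∫ t in Icc a c, f t :=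
  setIntegral_mono_set hf.integrableOn_Icc
    ((ae_restrict_iff' measurableSet_Icc).2 (ae_of_all _ hf0))
    (Icc_subset_Icc ha hc).eventuallyLE

theorem setIntegral_Icc_mono {g : ℝ → ℝ} {a' c' : ℝ} (hf : ContinuousOn f (Icc a' c'))
    (hg : ContinuousOn g (Icc a c)) (hg0 : ∀ t ∈ Icc a c, 0 ≤ g t)
    (hfg : ∀ t ∈ Icc a' c', f t ≤ g t) (ha : a ≤ a') (hc : c' ≤ c) :
    ∫ t in Icc a' c', f t ≤ ∫ t in Icc a c, g t :=
  (setIntegral_mono_on hf.integrableOn_Icc (hg.mono (Icc_subset_Icc ha hc)).integrableOn_Icc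
    measurableSet_Icc hfg).trans (setIntegral_Icc_mono_set hg hg0 ha hc)

theorem setIntegral_Icc_eq_sub_of_hasDerivWithinAt (hac : a ≤ c)
    (hf : ∀ t ∈ Icc a c, HasDerivWithinAt f (f' t) (Icc a c) t) (hf' : ContinuousOn f' (Icc a c)) :
    ∫ t in Icc a c, f' t = f c - f a := by
  rw [integral_Icc_eq_integral_Ioc, ← intervalIntegral.integral_of_le hac]
  refine intervalIntegral.integral_eq_sub_of_hasDeriv_right_of_le hac
    (fun t ht => (hf t ht).continuousWithinAt) (fun t ht => ?_)
    (hf'.intervalIntegrable_of_Icc hac)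
  exact ((hf t (Ioo_subset_Icc_self ht)).hasDerivAt (Icc_mem_nhds ht.1 ht.2)).hasDerivWithinAt

/-- Integrate `f' + g ≤ h` from a time in `[a, b]` at which `f` is at most its mean over `[a, b]`;
no initial value of `f` is needed. -/
theorem setIntegral_le_of_hasDerivWithinAt_add_le (hab : a < b) (hbc : b ≤ c)
    (hf : ∀ t ∈ Icc a c, HasDerivWithinAt f (f' t) (Icc a c) t) (hf' : ContinuousOn f' (Icc a c))
    (hg : ContinuousOn g (Icc a c)) (hh : ContinuousOn h (Icc a c))
    (hg0 : ∀ t ∈ Icc a c, 0 ≤ g t) (hh0 : ∀ t ∈ Icc a c, 0 ≤ h t) (hfc : 0 ≤ f c)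
    (hfgh : ∀ t ∈ Icc a c, f' t + g t ≤ h t) :
    ∫ t in Icc b c, g t ≤ (∫ t in Icc a c, h t) + (∫ t in Icc a b, f t) / (b - a) := by
  have hfc' : ContinuousOn f (Icc a c) := fun t ht => (hf t ht).continuousWithinAt
  obtain ⟨t₀, ht₀, hft₀⟩ := exists_mul_le_setIntegral_Icc hab.le
    (hfc'.mono (Icc_subset_Icc le_rfl hbc))
  have hsub : Icc t₀ c ⊆ Icc a c := Icc_subset_Icc ht₀.1 le_rfl
  have hftc : ∫ t in Icc t₀ c, f' t = f c - f t₀ :=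
    setIntegral_Icc_eq_sub_of_hasDerivWithinAt (ht₀.2.trans hbc)
      (fun t ht => ((hf t (hsub ht)).mono hsub)) (hf'.mono hsub)
  have hgh : ∫ t in Icc t₀ c, g t ≤ ∫ t in Icc t₀ c, (h t - f' t) :=
    setIntegral_mono_on ((hg.mono hsub).integrableOn_Icc)
      (((hh.sub hf').mono hsub).integrableOn_Icc) measurableSet_Icc
      (fun t ht => by linarith [hfgh t (hsub ht)])
  rw [integral_sub ((hh.mono hsub).integrableOn_Icc) ((hf'.mono hsub).integrableOn_Icc), hftc]
    at hgh
  calc ∫ t in Icc b c, g t ≤ ∫ t in Icc t₀ c, g t :=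
        setIntegral_Icc_mono_set (hg.mono hsub) (fun t ht => hg0 t (hsub ht)) ht₀.2 le_rfl
    _ ≤ (∫ t in Icc a c, h t) + f t₀ := by
        linarith [setIntegral_Icc_mono_set hh hh0 ht₀.1 (le_refl c)]
    _ ≤ (∫ t in Icc a c, h t) + (∫ t in Icc a b, f t) / (b - a) := by
        gcongr
        rw [le_div_iff₀ (sub_pos.2 hab)]
        exact hft₀

end Calculus

theorem neg_mul_cutoff_sub_add_le (fx fy ηx ηy : ℝ) :
    -((fy - fx) * (ηy ^ 2 * fy - ηx ^ 2 * fx)) + (ηx ^ 2 + ηy ^ 2) / 4 * (fy - fx) ^ 2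
      ≤ (fx ^ 2 + fy ^ 2) * (ηx - ηy) ^ 2 := by
  nlinarith [sq_nonneg ((fy - fx) * (ηx + ηy) + 2 * (ηy - ηx) * (fx + fy)),
    sq_nonneg ((ηx - ηy) * (fx - fy))]

theorem neg_mul_sq_sub_sq_mul_le {R ρ a d e f : ℝ} (hf : 0 ≤ f) (hfe : f ≤ e)
    (hef : e - f ≤ ρ / R) :
    -(a * ((e ^ 2 - f ^ 2) * d)) ≤ 1 / 2 * (e ^ 2 * d ^ 2 * ρ ^ 2) + 2 * a ^ 2 / R ^ 2 := by
  have hsq : 0 ≤ e ^ 2 - f ^ 2 := by nlinarith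
  have hsq' : e ^ 2 - f ^ 2 ≤ ρ / R * (2 * e) := by nlinarith
  have h1 : -(a * ((e ^ 2 - f ^ 2) * d)) ≤ |a| * |d| * (ρ / R * (2 * e)) := by
    rw [← abs_mul]
    calc -(a * ((e ^ 2 - f ^ 2) * d)) = -(a * d) * (e ^ 2 - f ^ 2) := by ring
      _ ≤ |a * d| * (e ^ 2 - f ^ 2) := by gcongr; exact neg_le_abs _
      _ ≤ |a * d| * (ρ / R * (2 * e)) := by gcongr
  have hsplit : (e * |d| * ρ - 2 * |a| / R) ^ 2
      = e ^ 2 * d ^ 2 * ρ ^ 2 - 2 * (|a| * |d| * (ρ / R * (2 * e))) + 4 * (a ^ 2 / R ^ 2) := by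
    rw [sub_sq, mul_pow, mul_pow, sq_abs, div_pow, mul_pow, sq_abs]; ring
  have hamgm := hsplit ▸ sq_nonneg (e * |d| * ρ - 2 * |a| / R)
  rw [mul_div_assoc]
  linarith

theorem neg_mul_sub_min_sq_mul_le {R ρ a ηx ηy vx vy : ℝ} (hx : 0 ≤ ηx)
    (hy : 0 ≤ ηy) (hη : |ηx - ηy| ≤ ρ / R) :
    -(a * ((ηy ^ 2 * vy - ηx ^ 2 * vx) - min ηx ηy ^ 2 * (vy - vx)))
      ≤ 1 / 2 * ((ηx ^ 2 * vx ^ 2 + ηy ^ 2 * vy ^ 2) * ρ ^ 2) + 2 * a ^ 2 / R ^ 2 := by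
  have hρ : 0 ≤ ρ ^ 2 := sq_nonneg ρ
  rcases le_total ηx ηy with h | h
  · have := neg_mul_sq_sub_sq_mul_le (a := a) (d := vy) hx h
      ((le_abs_self _).trans (abs_sub_comm ηx ηy ▸ hη))
    rw [min_eq_left h]
    nlinarith [mul_nonneg (mul_nonneg (sq_nonneg ηx) (sq_nonneg vx)) hρ]
  · have := neg_mul_sq_sub_sq_mul_le (a := -a) (d := vx) hy h ((le_abs_self _).trans hη)
    rw [neg_sq] at this
    rw [min_eq_right h]
    nlinarith [mul_nonneg (mul_nonneg (sq_nonneg ηy) (sq_nonneg vy)) hρ]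

section FiniteGraph

variable {V : Type*} (A : Finset V) (w : V → V → ℝ)

def laplacianOn (f : V → ℝ) (x : V) : ℝ := ∑ y ∈ A, w x y * (f y - f x)

theorem sum_sum_mul_eq_half_sum_sum_add_swap (hw : ∀ x y, w x y = w y x) (F : V → V → ℝ) :
    ∑ x ∈ A, ∑ y ∈ A, w x y * F x y = 1 / 2 * ∑ x ∈ A, ∑ y ∈ A, w x y * (F x y + F y x) := by
  have hswap : ∑ x ∈ A, ∑ y ∈ A, w x y * F y x = ∑ x ∈ A, ∑ y ∈ A, w x y * F x y := by
    rw [Finset.sum_comm]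
    exact Finset.sum_congr rfl fun x _ => Finset.sum_congr rfl fun y _ => by rw [hw]
  simp only [mul_add, Finset.sum_add_distrib, hswap]
  ring

theorem sum_mul_laplacianOn (hw : ∀ x y, w x y = w y x) (f g : V → ℝ) :
    ∑ x ∈ A, g x * laplacianOn A w f x
      = -(1 / 2) * ∑ x ∈ A, ∑ y ∈ A, w x y * ((f y - f x) * (g y - g x)) := by
  calc ∑ x ∈ A, g x * laplacianOn A w f x
      = ∑ x ∈ A, ∑ y ∈ A, w x y * ((f y - f x) * g x) :=
        Finset.sum_congr rfl fun x _ => by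
          rw [laplacianOn, Finset.mul_sum]
          exact Finset.sum_congr rfl fun y _ => by ring
    _ = _ := by
        rw [sum_sum_mul_eq_half_sum_sum_add_swap A w hw, Finset.mul_sum, Finset.mul_sum]
        exact Finset.sum_congr rfl fun x _ => by
          rw [Finset.mul_sum, Finset.mul_sum]
          exact Finset.sum_congr rfl fun y _ => by ring

end FiniteGraph

section Intrinsic

variable {V : Type*} {A : Finset V} {w : V → V → ℝ} {m : V → ℝ} {ρ : V → V → ℝ}

structure IsIntrinsicOn (A : Finset V) (w : V → V → ℝ) (m : V → ℝ) (ρ : V → V → ℝ) : Prop where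
  symm : ∀ x y, w x y = w y x
  nonneg : ∀ x y, 0 ≤ w x y
  dist_symm : ∀ x y, ρ x y = ρ y x
  sum_le : ∀ x ∈ A, ∑ y ∈ A, w x y * ρ x y ^ 2 ≤ m x

namespace IsIntrinsicOn

theorem mass_nonneg (hG : IsIntrinsicOn A w m ρ) {x : V} (hx : x ∈ A) : 0 ≤ m x :=
  (Finset.sum_nonneg fun y _ => mul_nonneg (hG.nonneg x y) (sq_nonneg _)).trans (hG.sum_le x hx)

theorem sum_sum_mul_nonneg (hG : IsIntrinsicOn A w m ρ) {F : V → V → ℝ}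
    (hF : ∀ x y, 0 ≤ F x y) : 0 ≤ ∑ x ∈ A, ∑ y ∈ A, w x y * F x y :=
  Finset.sum_nonneg fun x _ => Finset.sum_nonneg fun y _ => mul_nonneg (hG.nonneg x y) (hF x y)

theorem sum_mul_mass_nonneg (hG : IsIntrinsicOn A w m ρ) {c : V → ℝ} (hc : ∀ x, 0 ≤ c x) :
    0 ≤ ∑ x ∈ A, c x * m x :=
  Finset.sum_nonneg fun x hx => mul_nonneg (hc x) (hG.mass_nonneg hx)

theorem sum_sum_mul_add_mul_dist_sq_le (hG : IsIntrinsicOn A w m ρ) {c : V → ℝ}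
    (hc : ∀ x ∈ A, 0 ≤ c x) :
    ∑ x ∈ A, ∑ y ∈ A, w x y * ((c x + c y) * ρ x y ^ 2) ≤ 2 * ∑ x ∈ A, c x * m x := by
  calc ∑ x ∈ A, ∑ y ∈ A, w x y * ((c x + c y) * ρ x y ^ 2)
      = ∑ x ∈ A, ∑ y ∈ A, w x y * (c x * ρ x y ^ 2 + c y * ρ y x ^ 2) :=
        Finset.sum_congr rfl fun x _ => Finset.sum_congr rfl fun y _ => by
          rw [hG.dist_symm y x]; ring
    _ = 2 * ∑ x ∈ A, ∑ y ∈ A, w x y * (c x * ρ x y ^ 2) := by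
        rw [sum_sum_mul_eq_half_sum_sum_add_swap A w hG.symm fun x y => c x * ρ x y ^ 2]
        ring
    _ ≤ 2 * ∑ x ∈ A, c x * m x := by
        gcongr with x hx
        calc ∑ y ∈ A, w x y * (c x * ρ x y ^ 2) = c x * ∑ y ∈ A, w x y * ρ x y ^ 2 := by
              rw [Finset.mul_sum]
              exact Finset.sum_congr rfl fun y _ => by ring
          _ ≤ c x * m x := mul_le_mul_of_nonneg_left (hG.sum_le x hx) (hc x hx)

theorem two_mul_sum_laplacianOn_add_le (hG : IsIntrinsicOn A w m ρ) {η : V → ℝ} {R : ℝ}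
    (hη : ∀ x y, |η x - η y| ≤ ρ x y / R) (f : V → ℝ) :
    2 * ∑ x ∈ A, η x ^ 2 * f x * laplacianOn A w f x
        + 1 / 2 * ∑ x ∈ A, ∑ y ∈ A, w x y * (η x ^ 2 * (f y - f x) ^ 2)
      ≤ 2 / R ^ 2 * ∑ x ∈ A, f x ^ 2 * m x := by
  calc 2 * ∑ x ∈ A, η x ^ 2 * f x * laplacianOn A w f x
        + 1 / 2 * ∑ x ∈ A, ∑ y ∈ A, w x y * (η x ^ 2 * (f y - f x) ^ 2)
      = ∑ x ∈ A, ∑ y ∈ A, w x y * (-((f y - f x) * (η y ^ 2 * f y - η x ^ 2 * f x))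
          + (η x ^ 2 + η y ^ 2) / 4 * (f y - f x) ^ 2) := by
        rw [sum_mul_laplacianOn A w hG.symm f fun x => η x ^ 2 * f x,
          sum_sum_mul_eq_half_sum_sum_add_swap A w hG.symm fun x y => η x ^ 2 * (f y - f x) ^ 2]
        simp only [Finset.mul_sum, ← Finset.sum_add_distrib]
        exact Finset.sum_congr rfl fun x _ => Finset.sum_congr rfl fun y _ => by ring
    _ ≤ ∑ x ∈ A, ∑ y ∈ A, w x y * ((f x ^ 2 + f y ^ 2) * ρ x y ^ 2) / R ^ 2 := by
        gcongr with x _ y _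
        rw [mul_div_assoc, mul_div_assoc]
        refine mul_le_mul_of_nonneg_left ((neg_mul_cutoff_sub_add_le _ _ _ _).trans ?_)
          (hG.nonneg x y)
        rw [← div_pow, ← sq_abs (η x - η y)]
        gcongr
        exact hη x y
    _ ≤ 2 / R ^ 2 * ∑ x ∈ A, f x ^ 2 * m x := by
        simp only [← Finset.sum_div]
        rw [div_mul_eq_mul_div]
        gcongr
        exact hG.sum_sum_mul_add_mul_dist_sq_le fun x _ => sq_nonneg _

/-- The `min` term becomes a time derivative when `v = ∂ₜ f`; the rest of
`η y ^ 2 * v y - η x ^ 2 * v x` is of size `|η x - η y|`, so it only lives on edges where `η`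
jumps, and there `ζ x = 1`. -/
theorem sum_laplacianOn_add_le (hG : IsIntrinsicOn A w m ρ) {η ζ : V → ℝ} {R : ℝ}
    (hη0 : ∀ x, 0 ≤ η x) (hη : ∀ x y, |η x - η y| ≤ ρ x y / R)
    (hζ : ∀ x ∈ A, ∀ y ∈ A, w x y ≠ 0 → η x ≠ η y → ζ x = 1) (f v : V → ℝ) :
    ∑ x ∈ A, η x ^ 2 * v x * laplacianOn A w f x
        + 1 / 2 * ∑ x ∈ A, ∑ y ∈ A, w x y * (min (η x) (η y) ^ 2 * ((f y - f x) * (v y - v x)))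
      ≤ 1 / 2 * ∑ x ∈ A, η x ^ 2 * v x ^ 2 * m x
        + 1 / R ^ 2 * ∑ x ∈ A, ∑ y ∈ A, w x y * (ζ x ^ 2 * (f y - f x) ^ 2) := by
  have hterm : ∀ x ∈ A, ∀ y ∈ A,
      w x y * (-(1 / 2) * ((f y - f x) * ((η y ^ 2 * v y - η x ^ 2 * v x)
        - min (η x) (η y) ^ 2 * (v y - v x))))
      ≤ w x y * (1 / 4 * ((η x ^ 2 * v x ^ 2 + η y ^ 2 * v y ^ 2) * ρ x y ^ 2)
        + 1 / R ^ 2 * (ζ x ^ 2 * (f y - f x) ^ 2)) := by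
    intro x hx y hy
    by_cases hw : w x y = 0
    · simp [hw]
    refine mul_le_mul_of_nonneg_left ?_ (hG.nonneg x y)
    by_cases he : η x = η y
    · rw [he, min_self]
      have : 0 ≤ 1 / R ^ 2 * (ζ x ^ 2 * (f y - f x) ^ 2) := by positivity
      nlinarith [sq_nonneg (η y * v x * ρ x y), sq_nonneg (η y * v y * ρ x y)]
    · rw [hζ x hx y hy hw he, one_pow, one_mul]
      have := neg_mul_sub_min_sq_mul_le (a := f y - f x) (vx := v x) (vy := v y) (hη0 x) (hη0 y)
        (hη x y)
      have hR : 2 * (f y - f x) ^ 2 / R ^ 2 = 2 * (1 / R ^ 2 * (f y - f x) ^ 2) := by ring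
      linarith
  calc ∑ x ∈ A, η x ^ 2 * v x * laplacianOn A w f x
        + 1 / 2 * ∑ x ∈ A, ∑ y ∈ A, w x y * (min (η x) (η y) ^ 2 * ((f y - f x) * (v y - v x)))
      = ∑ x ∈ A, ∑ y ∈ A, w x y * (-(1 / 2) * ((f y - f x) * ((η y ^ 2 * v y - η x ^ 2 * v x)
          - min (η x) (η y) ^ 2 * (v y - v x)))) := by
        rw [sum_mul_laplacianOn A w hG.symm f fun x => η x ^ 2 * v x]
        simp only [Finset.mul_sum, ← Finset.sum_add_distrib]
        exact Finset.sum_congr rfl fun x _ => Finset.sum_congr rfl fun y _ => by ring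
    _ ≤ ∑ x ∈ A, ∑ y ∈ A, w x y * (1 / 4 * ((η x ^ 2 * v x ^ 2 + η y ^ 2 * v y ^ 2) * ρ x y ^ 2)
          + 1 / R ^ 2 * (ζ x ^ 2 * (f y - f x) ^ 2)) := by
        exact Finset.sum_le_sum fun x hx => Finset.sum_le_sum fun y hy => hterm x hx y hy
    _ = 1 / 4 * ∑ x ∈ A, ∑ y ∈ A, w x y * ((η x ^ 2 * v x ^ 2 + η y ^ 2 * v y ^ 2) * ρ x y ^ 2)
          + 1 / R ^ 2 * ∑ x ∈ A, ∑ y ∈ A, w x y * (ζ x ^ 2 * (f y - f x) ^ 2) := by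
        simp only [Finset.mul_sum, ← Finset.sum_add_distrib]
        exact Finset.sum_congr rfl fun x _ => Finset.sum_congr rfl fun y _ => by ring
    _ ≤ 1 / 2 * ∑ x ∈ A, η x ^ 2 * v x ^ 2 * m x
          + 1 / R ^ 2 * ∑ x ∈ A, ∑ y ∈ A, w x y * (ζ x ^ 2 * (f y - f x) ^ 2) := by
        have := hG.sum_sum_mul_add_mul_dist_sq_le (c := fun x => η x ^ 2 * v x ^ 2)
          fun x _ => by positivity
        linarith

end IsIntrinsicOn

end Intrinsic

section Heat

variable {V : Type*} {A B : Finset V} {w : V → V → ℝ} {m : V → ℝ} {ρ : V → V → ℝ} {R : ℝ}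
  {η ζ η₁ η₂ : V → ℝ} {u v : V → ℝ → ℝ} {s : Set ℝ} {t : ℝ}

structure IsCutoff (ρ : V → V → ℝ) (R : ℝ) (η : V → ℝ) : Prop where
  nonneg : ∀ x, 0 ≤ η x
  le_one : ∀ x, η x ≤ 1
  abs_sub_le : ∀ x y, |η x - η y| ≤ ρ x y / R

theorem IsCutoff.sq_le_one (hη : IsCutoff ρ R η) (x : V) : η x ^ 2 ≤ 1 :=
  pow_le_one₀ (hη.nonneg x) (hη.le_one x)

theorem sum_cutoff_mul_mass_mul_eq {f g h : V → ℝ}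
    (hh : ∀ x ∈ A, η x ≠ 0 → m x * h x = laplacianOn A w f x) :
    ∑ x ∈ A, η x ^ 2 * g x * (m x * h x) = ∑ x ∈ A, η x ^ 2 * g x * laplacianOn A w f x := by
  refine Finset.sum_congr rfl fun x hx => ?_
  by_cases hx0 : η x = 0
  · simp [hx0]
  · rw [hh x hx hx0]

theorem hasDerivWithinAt_sum_cutoff_mul_sq (hu : ∀ x, HasDerivWithinAt (u x) (v x t) s t)
    (hv : ∀ x ∈ A, η x ≠ 0 → m x * v x t = laplacianOn A w (fun y => u y t) x) :
    HasDerivWithinAt (fun t => ∑ x ∈ A, η x ^ 2 * u x t ^ 2 * m x)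
      (2 * ∑ x ∈ A, η x ^ 2 * u x t * laplacianOn A w (fun y => u y t) x) s t := by
  refine (HasDerivWithinAt.fun_sum fun x _ =>
    (((hu x).fun_pow 2).const_mul (η x ^ 2)).mul_const (m x)).congr_deriv ?_
  rw [← sum_cutoff_mul_mass_mul_eq hv, Finset.mul_sum]
  exact Finset.sum_congr rfl fun x _ => by push_cast; ring

theorem hasDerivWithinAt_sum_sum_mul_sq (hu : ∀ x, HasDerivWithinAt (u x) (v x t) s t)
    (c : V → V → ℝ) :
    HasDerivWithinAt (fun t => ∑ x ∈ A, ∑ y ∈ A, w x y * (c x y * (u y t - u x t) ^ 2))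
      (2 * ∑ x ∈ A, ∑ y ∈ A, w x y * (c x y * ((u y t - u x t) * (v y t - v x t)))) s t := by
  refine (HasDerivWithinAt.fun_sum fun x _ => HasDerivWithinAt.fun_sum fun y _ =>
    ((((hu y).sub (hu x)).fun_pow 2).const_mul (c x y)).const_mul (w x y)).congr_deriv ?_
  simp only [Finset.mul_sum]
  exact Finset.sum_congr rfl fun x _ => Finset.sum_congr rfl fun y _ => by
    push_cast [Pi.sub_apply]; ring

theorem continuousOn_sum_sum_mul_sq (hu : ∀ x, ContinuousOn (u x) s) (B : Finset V)
    (c : V → V → ℝ) :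
    ContinuousOn (fun t => ∑ x ∈ B, ∑ y ∈ A, w x y * (c x y * (u y t - u x t) ^ 2)) s :=
  continuousOn_finsetSum _ fun x _ => continuousOn_finsetSum _ fun y _ =>
    continuousOn_const.mul (continuousOn_const.mul (((hu y).sub (hu x)).pow 2))

theorem continuousOn_sum_mul_sq_mul (hv : ∀ x, ContinuousOn (v x) s) (c : V → ℝ) :
    ContinuousOn (fun t => ∑ x ∈ A, c x * v x t ^ 2 * m x) s :=
  continuousOn_finsetSum _ fun x _ => (continuousOn_const.mul ((hv x).pow 2)).mul continuousOn_const

theorem IsIntrinsicOn.integral_dirichlet_cutoff_le (hG : IsIntrinsicOn A w m ρ) (hR : 0 < R)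
    (hη : IsCutoff ρ R η) (hu : ∀ x, ∀ t ≤ 0, HasDerivWithinAt (u x) (v x t) (Iic 0) t)
    (hv : ∀ x ∈ A, η x ≠ 0 → ∀ t ≤ 0, m x * v x t = laplacianOn A w (fun y => u y t) x) :
    ∫ t in Icc (-(2 * R ^ 2)) 0, ∑ x ∈ A, ∑ y ∈ A, w x y * (η x ^ 2 * (u y t - u x t) ^ 2)
      ≤ 5 / R ^ 2 * ∫ t in Icc (-(4 * R ^ 2)) 0, ∑ x ∈ A, u x t ^ 2 * m x := by
  set J := ∫ t in Icc (-(4 * R ^ 2)) 0, ∑ x ∈ A, u x t ^ 2 * m x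
  have hR2 : 0 < R ^ 2 := by positivity
  have hsub : Icc (-(4 * R ^ 2)) 0 ⊆ Iic (0 : ℝ) := Icc_subset_Iic_self
  have huc : ∀ x, ContinuousOn (u x) (Icc (-(4 * R ^ 2)) 0) := fun x t ht =>
    (hu x t ht.2).continuousWithinAt.mono hsub
  have hMc : ContinuousOn (fun t => ∑ x ∈ A, u x t ^ 2 * m x) (Icc (-(4 * R ^ 2)) 0) :=
    continuousOn_finsetSum _ fun x _ => ((huc x).pow 2).mul continuousOn_const
  have hderiv : ∀ t ∈ Icc (-(4 * R ^ 2)) 0,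
      HasDerivWithinAt (fun t => ∑ x ∈ A, η x ^ 2 * u x t ^ 2 * m x)
        (2 * ∑ x ∈ A, η x ^ 2 * u x t * laplacianOn A w (fun y => u y t) x)
        (Icc (-(4 * R ^ 2)) 0) t := fun t ht =>
    (hasDerivWithinAt_sum_cutoff_mul_sq (fun x => hu x t ht.2)
      fun x hx hx0 => hv x hx hx0 t ht.2).mono hsub
  have hEM : ∫ t in Icc (-(4 * R ^ 2)) (-(2 * R ^ 2)), ∑ x ∈ A, η x ^ 2 * u x t ^ 2 * m x ≤ J :=
    setIntegral_Icc_mono (ContinuousOn.mono (fun t ht => (hderiv t ht).continuousWithinAt)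
        (Icc_subset_Icc le_rfl (by linarith))) hMc
      (fun t _ => hG.sum_mul_mass_nonneg fun x => sq_nonneg _)
      (fun t _ => Finset.sum_le_sum fun x hx => by
        nlinarith [hη.sq_le_one x, mul_nonneg (sq_nonneg (u x t)) (hG.mass_nonneg hx)])
      le_rfl (by linarith)
  have key := setIntegral_le_of_hasDerivWithinAt_add_le (b := -(2 * R ^ 2))
    (g := fun t => 1 / 2 * ∑ x ∈ A, ∑ y ∈ A, w x y * (η x ^ 2 * (u y t - u x t) ^ 2))
    (h := fun t => 2 / R ^ 2 * ∑ x ∈ A, u x t ^ 2 * m x)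
    (by linarith) (by linarith) hderiv
    (continuousOn_const.mul <| continuousOn_finsetSum _ fun x _ =>
      ((continuousOn_const.mul (huc x)).mul <| continuousOn_finsetSum _ fun y _ =>
        continuousOn_const.mul ((huc y).sub (huc x))))
    (continuousOn_const.mul (continuousOn_sum_sum_mul_sq huc A _))
    (continuousOn_const.mul hMc)
    (fun t _ => mul_nonneg (by norm_num) (hG.sum_sum_mul_nonneg fun x y => by positivity))
    (fun t _ => mul_nonneg (by positivity) (hG.sum_mul_mass_nonneg fun x => sq_nonneg _))
    (hG.sum_mul_mass_nonneg fun x => by positivity)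
    (fun t _ => hG.two_mul_sum_laplacianOn_add_le hη.abs_sub_le fun y => u y t)
  simp only [integral_const_mul] at key
  rw [show -(2 * R ^ 2) - -(4 * R ^ 2) = 2 * R ^ 2 by ring] at key
  have := div_le_div_of_nonneg_right hEM (by positivity : (0 : ℝ) ≤ 2 * R ^ 2)
  calc _ ≤ 2 * (2 / R ^ 2 * J + J / (2 * R ^ 2)) := by linarith
    _ = 5 / R ^ 2 * J := by field_simp; ring

theorem IsCutoff.min_sq_le (hη : IsCutoff ρ R η) (hnest : ∀ x, η x ≠ 0 → ζ x = 1) (x y : V) :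
    min (η x) (η y) ^ 2 ≤ ζ x ^ 2 := by
  by_cases hx : η x = 0
  · rw [hx, min_eq_left (hη.nonneg y), sq, zero_mul]
    exact sq_nonneg _
  · rw [hnest x hx, one_pow]
    exact pow_le_one₀ (le_min (hη.nonneg x) (hη.nonneg y)) ((min_le_left _ _).trans (hη.le_one x))

theorem IsIntrinsicOn.sum_cutoff_sq_mul_mass_add_le (hG : IsIntrinsicOn A w m ρ)
    (hη : IsCutoff ρ R η) (hζ : ∀ x ∈ A, ∀ y ∈ A, w x y ≠ 0 → η x ≠ η y → ζ x = 1)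
    {f g : V → ℝ} (hg : ∀ x ∈ A, η x ≠ 0 → m x * g x = laplacianOn A w f x) :
    1 / 2 * ∑ x ∈ A, η x ^ 2 * g x ^ 2 * m x
        + 1 / 2 * ∑ x ∈ A, ∑ y ∈ A, w x y * (min (η x) (η y) ^ 2 * ((f y - f x) * (g y - g x)))
      ≤ 1 / R ^ 2 * ∑ x ∈ A, ∑ y ∈ A, w x y * (ζ x ^ 2 * (f y - f x) ^ 2) := by
  have hF : ∑ x ∈ A, η x ^ 2 * g x * laplacianOn A w f x = ∑ x ∈ A, η x ^ 2 * g x ^ 2 * m x := by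
    rw [← sum_cutoff_mul_mass_mul_eq hg]
    exact Finset.sum_congr rfl fun x _ => by ring
  linarith [hG.sum_laplacianOn_add_le hη.nonneg hη.abs_sub_le hζ f g]

theorem IsIntrinsicOn.integral_sq_deriv_cutoff_le (hG : IsIntrinsicOn A w m ρ) (hR : 0 < R)
    (hη : IsCutoff ρ R η) (hnest : ∀ x, η x ≠ 0 → ζ x = 1)
    (hζ : ∀ x ∈ A, ∀ y ∈ A, w x y ≠ 0 → η x ≠ η y → ζ x = 1)
    (hu : ∀ x, ∀ t ≤ 0, HasDerivWithinAt (u x) (v x t) (Iic 0) t)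
    (hvc : ∀ x, ContinuousOn (v x) (Iic 0))
    (hv : ∀ x ∈ A, η x ≠ 0 → ∀ t ≤ 0, m x * v x t = laplacianOn A w (fun y => u y t) x) :
    ∫ t in Icc (-R ^ 2) 0, ∑ x ∈ A, η x ^ 2 * v x t ^ 2 * m x
      ≤ 5 / (2 * R ^ 2) * ∫ t in Icc (-(2 * R ^ 2)) 0,
          ∑ x ∈ A, ∑ y ∈ A, w x y * (ζ x ^ 2 * (u y t - u x t) ^ 2) := by
  set K := ∫ t in Icc (-(2 * R ^ 2)) 0, ∑ x ∈ A, ∑ y ∈ A, w x y * (ζ x ^ 2 * (u y t - u x t) ^ 2)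
  have hR2 : 0 < R ^ 2 := by positivity
  have hsub : Icc (-(2 * R ^ 2)) 0 ⊆ Iic (0 : ℝ) := Icc_subset_Iic_self
  have huc : ∀ x, ContinuousOn (u x) (Icc (-(2 * R ^ 2)) 0) := fun x t ht =>
    (hu x t ht.2).continuousWithinAt.mono hsub
  have hvc' : ∀ x, ContinuousOn (v x) (Icc (-(2 * R ^ 2)) 0) := fun x => (hvc x).mono hsub
  have hsq := fun c : V → V → ℝ => continuousOn_sum_sum_mul_sq (A := A) (w := w) huc A c
  have hGD : ∫ t in Icc (-(2 * R ^ 2)) (-R ^ 2),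
      1 / 4 * ∑ x ∈ A, ∑ y ∈ A, w x y * (min (η x) (η y) ^ 2 * (u y t - u x t) ^ 2)
      ≤ ∫ t in Icc (-(2 * R ^ 2)) 0,
        1 / 4 * ∑ x ∈ A, ∑ y ∈ A, w x y * (ζ x ^ 2 * (u y t - u x t) ^ 2) :=
    setIntegral_Icc_mono (((hsq _).const_mul _).mono (Icc_subset_Icc le_rfl (by linarith)))
      ((hsq _).const_mul _)
      (fun t _ => mul_nonneg (by norm_num) (hG.sum_sum_mul_nonneg fun x y => by positivity))
      (fun t _ => mul_le_mul_of_nonneg_left (Finset.sum_le_sum fun x _ => Finset.sum_le_sum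
        fun y _ => mul_le_mul_of_nonneg_left (mul_le_mul_of_nonneg_right
          (hη.min_sq_le hnest x y) (sq_nonneg _)) (hG.nonneg x y)) (by norm_num))
      le_rfl (by linarith)
  have key := setIntegral_le_of_hasDerivWithinAt_add_le (b := -R ^ 2)
    (g := fun t => 1 / 2 * ∑ x ∈ A, η x ^ 2 * v x t ^ 2 * m x)
    (h := fun t => 1 / R ^ 2 * ∑ x ∈ A, ∑ y ∈ A, w x y * (ζ x ^ 2 * (u y t - u x t) ^ 2))
    (by linarith) (by linarith)
    (fun t ht => ((hasDerivWithinAt_sum_sum_mul_sq (fun x => hu x t ht.2)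
      fun x y => min (η x) (η y) ^ 2).const_mul (1 / 4)).mono hsub)
    (continuousOn_const.mul <| continuousOn_const.mul <| continuousOn_finsetSum _ fun x _ =>
      continuousOn_finsetSum _ fun y _ => continuousOn_const.mul (continuousOn_const.mul
        (((huc y).sub (huc x)).mul ((hvc' y).sub (hvc' x)))))
    (continuousOn_const.mul (continuousOn_sum_mul_sq_mul hvc' _)) ((hsq _).const_mul _)
    (fun t _ => mul_nonneg (by norm_num) (hG.sum_mul_mass_nonneg fun x => by positivity))
    (fun t _ => mul_nonneg (by positivity) (hG.sum_sum_mul_nonneg fun x y => by positivity))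
    (mul_nonneg (by norm_num) (hG.sum_sum_mul_nonneg fun x y => by positivity))
    (fun t ht => by
      linarith [hG.sum_cutoff_sq_mul_mass_add_le hη hζ fun x hx hx0 => hv x hx hx0 t ht.2])
  simp only [integral_const_mul] at key hGD
  rw [show -R ^ 2 - -(2 * R ^ 2) = R ^ 2 by ring] at key
  have := div_le_div_of_nonneg_right hGD hR2.le
  calc _ ≤ 2 * (1 / R ^ 2 * K + 1 / 4 * K / R ^ 2) := by linarith
    _ = 5 / (2 * R ^ 2) * K := by field_simp; ring

theorem IsIntrinsicOn.sum_sum_sq_le_sum_sum_cutoff (hG : IsIntrinsicOn A w m ρ) (hBA : B ⊆ A)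
    (hη : ∀ x ∈ B, η x = 1) (f : V → ℝ) :
    ∑ x ∈ B, ∑ y ∈ A, w x y * (f y - f x) ^ 2
      ≤ ∑ x ∈ A, ∑ y ∈ A, w x y * (η x ^ 2 * (f y - f x) ^ 2) :=
  le_of_eq_of_le (Finset.sum_congr rfl fun x hx => by simp [hη x hx])
    (Finset.sum_le_sum_of_subset_of_nonneg hBA fun x _ _ =>
      Finset.sum_nonneg fun y _ => mul_nonneg (hG.nonneg x y) (by positivity))

theorem IsIntrinsicOn.sum_sq_mul_mass_le_sum_cutoff (hG : IsIntrinsicOn A w m ρ) (hBA : B ⊆ A)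
    (hη : ∀ x ∈ B, η x = 1) (g : V → ℝ) :
    ∑ x ∈ B, g x ^ 2 * m x ≤ ∑ x ∈ A, η x ^ 2 * g x ^ 2 * m x :=
  le_of_eq_of_le (Finset.sum_congr rfl fun x hx => by simp [hη x hx])
    (Finset.sum_le_sum_of_subset_of_nonneg hBA fun x hx _ =>
      mul_nonneg (by positivity) (hG.mass_nonneg hx))

theorem IsIntrinsicOn.caccioppoli (hG : IsIntrinsicOn A w m ρ) (hR : 0 < R)
    (hη₁ : IsCutoff ρ R η₁) (hη₂ : IsCutoff ρ R η₂) (hnest : ∀ x, η₂ x ≠ 0 → η₁ x = 1)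
    (hζ : ∀ x ∈ A, ∀ y ∈ A, w x y ≠ 0 → η₂ x ≠ η₂ y → η₁ x = 1)
    (hBA : B ⊆ A) (hB : ∀ x ∈ B, η₂ x = 1)
    (hu : ∀ x, ∀ t ≤ 0, HasDerivWithinAt (u x) (v x t) (Iic 0) t)
    (hvc : ∀ x, ContinuousOn (v x) (Iic 0))
    (hv : ∀ x ∈ A, η₁ x ≠ 0 → ∀ t ≤ 0, m x * v x t = laplacianOn A w (fun y => u y t) x) :
    R ^ 2 * (∫ t in Icc (-R ^ 2) 0, 1 / 2 * ∑ x ∈ B, ∑ y ∈ A, w x y * (u y t - u x t) ^ 2)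
      + R ^ 4 * ∫ t in Icc (-R ^ 2) 0, ∑ x ∈ B, v x t ^ 2 * m x
      ≤ 15 * ∫ t in Icc (-(4 * R ^ 2)) 0, ∑ x ∈ A, u x t ^ 2 * m x := by
  set J := ∫ t in Icc (-(4 * R ^ 2)) 0, ∑ x ∈ A, u x t ^ 2 * m x
  set D := ∫ t in Icc (-(2 * R ^ 2)) 0,
    ∑ x ∈ A, ∑ y ∈ A, w x y * (η₁ x ^ 2 * (u y t - u x t) ^ 2)
  have hR2 : 0 < R ^ 2 := by positivity
  have hsub : Icc (-(2 * R ^ 2)) 0 ⊆ Iic (0 : ℝ) := Icc_subset_Iic_self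
  have hsub' : Icc (-R ^ 2) 0 ⊆ Iic (0 : ℝ) := Icc_subset_Iic_self
  have huc : ∀ x, ContinuousOn (u x) (Iic 0) := fun x t ht => (hu x t ht).continuousWithinAt
  have hη₁B : ∀ x ∈ B, η₁ x = 1 := fun x hx => hnest x (by rw [hB x hx]; exact one_ne_zero)
  have hgrad : ∫ t in Icc (-R ^ 2) 0, 1 / 2 * ∑ x ∈ B, ∑ y ∈ A, w x y * (u y t - u x t) ^ 2
      ≤ ∫ t in Icc (-(2 * R ^ 2)) 0,
        1 / 2 * ∑ x ∈ A, ∑ y ∈ A, w x y * (η₁ x ^ 2 * (u y t - u x t) ^ 2) :=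
    setIntegral_Icc_mono ((continuousOn_const.mul <| continuousOn_finsetSum _ fun x _ =>
        continuousOn_finsetSum _ fun y _ =>
          continuousOn_const.mul (((huc y).sub (huc x)).pow 2)).mono hsub')
      ((continuousOn_const.mul (continuousOn_sum_sum_mul_sq huc A _)).mono hsub)
      (fun t _ => mul_nonneg (by norm_num) (hG.sum_sum_mul_nonneg fun x y => by positivity))
      (fun t _ => mul_le_mul_of_nonneg_left (hG.sum_sum_sq_le_sum_sum_cutoff hBA hη₁B _)
        (by norm_num))
      (by linarith) le_rfl
  have hdt : ∫ t in Icc (-R ^ 2) 0, ∑ x ∈ B, v x t ^ 2 * m x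
      ≤ ∫ t in Icc (-R ^ 2) 0, ∑ x ∈ A, η₂ x ^ 2 * v x t ^ 2 * m x :=
    setIntegral_Icc_mono ((continuousOn_finsetSum _ fun x _ =>
        ((hvc x).pow 2).mul continuousOn_const).mono hsub')
      ((continuousOn_sum_mul_sq_mul hvc _).mono hsub')
      (fun t _ => hG.sum_mul_mass_nonneg fun x => by positivity)
      (fun t _ => hG.sum_sq_mul_mass_le_sum_cutoff hBA hB _) le_rfl le_rfl
  have hDJ : D ≤ 5 / R ^ 2 * J := hG.integral_dirichlet_cutoff_le hR hη₁ hu hv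
  have hFD := hG.integral_sq_deriv_cutoff_le hR hη₂ hnest hζ hu hvc
    fun x hx hx0 => hv x hx (by rw [hnest x hx0]; exact one_ne_zero)
  calc _ ≤ R ^ 2 * (1 / 2 * D) + R ^ 4 * (5 / (2 * R ^ 2) * D) :=
        add_le_add (mul_le_mul_of_nonneg_left (hgrad.trans_eq (integral_const_mul _ _)) hR2.le)
          (mul_le_mul_of_nonneg_left (hdt.trans hFD) (by positivity))
    _ = 3 * R ^ 2 * D := by field_simp; ring
    _ ≤ 3 * R ^ 2 * (5 / R ^ 2 * J) := by gcongr
    _ = 15 * J := by field_simp; ring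

end Heat

section WeightedGraph

variable {V : Type*} {w : V → V → ℝ} {m : V → ℝ} {ρ : V → V → ℝ} {x₀ x y : V} {R r r' : ℝ}

noncomputable def ballCutoff (ρ : V → V → ℝ) (x₀ : V) (R r : ℝ) (x : V) : ℝ :=
  projIcc 0 1 zero_le_one ((r - ρ x x₀) / R)

theorem ballCutoff_eq_one (hR : 0 < R) (hx : ρ x x₀ ≤ r - R) : ballCutoff ρ x₀ R r x = 1 := by
  rw [ballCutoff, projIcc_of_right_le _ ((one_le_div hR).2 (by linarith))]

theorem lt_of_ballCutoff_ne_zero (hR : 0 < R) (hx : ballCutoff ρ x₀ R r x ≠ 0) : ρ x x₀ < r := by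
  by_contra! h
  exact hx (by rw [ballCutoff, projIcc_of_le_left _ (div_nonpos_of_nonpos_of_nonneg (by linarith)
    hR.le)])

theorem isCutoff_ballCutoff (hR : 0 < R) (hsymm : ∀ x y, ρ x y = ρ y x)
    (htri : ∀ x y z, ρ x z ≤ ρ x y + ρ y z) : IsCutoff ρ R (ballCutoff ρ x₀ R r) where
  nonneg x := (projIcc 0 1 zero_le_one _).2.1
  le_one x := (projIcc 0 1 zero_le_one _).2.2
  abs_sub_le x y := by
    refine (abs_projIcc_sub_projIcc zero_le_one).trans ?_
    rw [← sub_div, abs_div, abs_of_pos hR]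
    gcongr
    rw [sub_sub_sub_cancel_left, abs_sub_le_iff]
    constructor <;> linarith [htri x y x₀, htri y x x₀, hsymm x y]

theorem ballCutoff_eq_one_of_ne_zero (hR : 0 < R) (htri : ∀ x y z, ρ x z ≤ ρ x y + ρ y z)
    (hxy : ρ x y ≤ R) (hr : r' + R ≤ r - R) (hy : ballCutoff ρ x₀ R r' y ≠ 0) :
    ballCutoff ρ x₀ R r x = 1 :=
  ballCutoff_eq_one hR (by linarith [htri x y x₀, lt_of_ballCutoff_ne_zero hR hy])

structure IsIntrinsicGraph (w : V → V → ℝ) (m : V → ℝ) (ρ : V → V → ℝ) : Prop where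
  symm : ∀ x y, w x y = w y x
  nonneg : ∀ x y, 0 ≤ w x y
  finite_support : ∀ x, {y | w x y ≠ 0}.Finite
  mass_pos : ∀ x, 0 < m x
  dist_symm : ∀ x y, ρ x y = ρ y x
  dist_triangle : ∀ x y z, ρ x z ≤ ρ x y + ρ y z
  finsum_le : ∀ x, ∑ᶠ y, w x y * ρ x y ^ 2 ≤ m x

noncomputable def graphLaplacian (w : V → V → ℝ) (m : V → ℝ) (f : V → ℝ) (x : V) : ℝ :=
  (∑ᶠ y, w x y * (f y - f x)) / m x

noncomputable def carreDuChamp (w : V → V → ℝ) (m : V → ℝ) (f : V → ℝ) (x : V) : ℝ :=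
  1 / (2 * m x) * ∑ᶠ y, w x y * (f y - f x) ^ 2

namespace IsIntrinsicGraph

theorem finsum_eq_sum (hG : IsIntrinsicGraph w m ρ) (x : V) (g : V → ℝ) :
    ∑ᶠ y, w x y * g y = ∑ y ∈ (hG.finite_support x).toFinset, w x y * g y :=
  finsum_eq_sum_of_support_subset _ fun y hy => by
    simpa using left_ne_zero_of_mul hy

theorem isIntrinsicOn (hG : IsIntrinsicGraph w m ρ) (A : Finset V) : IsIntrinsicOn A w m ρ where
  symm := hG.symm
  nonneg := hG.nonneg
  dist_symm := hG.dist_symm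
  sum_le x _ := by
    classical
    refine le_trans ?_ (hG.finsum_le x)
    rw [finsum_eq_sum_of_support_subset (s := A ∪ (hG.finite_support x).toFinset) _
      fun y hy => by simpa using Or.inr (left_ne_zero_of_mul hy)]
    exact Finset.sum_le_sum_of_subset_of_nonneg Finset.subset_union_left fun y _ _ =>
      mul_nonneg (hG.nonneg x y) (sq_nonneg _)

theorem continuousOn_graphLaplacian (hG : IsIntrinsicGraph w m ρ) {u : V → ℝ → ℝ} {s : Set ℝ}
    (hu : ∀ x, ContinuousOn (u x) s) (x : V) :
    ContinuousOn (fun t => graphLaplacian w m (fun y => u y t) x) s := by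
  simp only [graphLaplacian, hG.finsum_eq_sum x]
  exact (continuousOn_finsetSum _ fun y _ => continuousOn_const.mul ((hu y).sub (hu x))).div_const _

theorem finsum_eq_sum_ball (hG : IsIntrinsicGraph w m ρ) (hball : ∀ x r, {y | ρ y x ≤ r}.Finite)
    (hjump : ∀ x y, w x y ≠ 0 → ρ x y ≤ R) (hx : ρ x x₀ + R ≤ r) (g : V → ℝ) :
    ∑ᶠ y, w x y * g y = ∑ y ∈ (hball x₀ r).toFinset, w x y * g y := by
  refine finsum_eq_sum_of_support_subset _ fun y hy => ?_
  have := hjump x y (left_ne_zero_of_mul hy)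
  rw [Finset.mem_coe, Finite.mem_toFinset]
  exact (hG.dist_triangle y x x₀).trans (by linarith [hG.dist_symm x y])

theorem mul_graphLaplacian_eq (hG : IsIntrinsicGraph w m ρ)
    (hball : ∀ x r, {y | ρ y x ≤ r}.Finite) (hjump : ∀ x y, w x y ≠ 0 → ρ x y ≤ R)
    (hx : ρ x x₀ + R ≤ r) (f : V → ℝ) :
    m x * graphLaplacian w m f x = laplacianOn (hball x₀ r).toFinset w f x := by
  rw [graphLaplacian, mul_div_cancel₀ _ (hG.mass_pos x).ne', hG.finsum_eq_sum_ball hball hjump hx]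
  rfl

theorem carreDuChamp_mul_eq (hG : IsIntrinsicGraph w m ρ)
    (hball : ∀ x r, {y | ρ y x ≤ r}.Finite) (hjump : ∀ x y, w x y ≠ 0 → ρ x y ≤ R)
    (hx : ρ x x₀ + R ≤ r) (f : V → ℝ) :
    carreDuChamp w m f x * m x = 1 / 2 * ∑ y ∈ (hball x₀ r).toFinset, w x y * (f y - f x) ^ 2 := by
  rw [carreDuChamp, hG.finsum_eq_sum_ball hball hjump hx]
  field_simp [(hG.mass_pos x).ne']

theorem caccioppoli_ball (hG : IsIntrinsicGraph w m ρ)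
    (hball : ∀ x r, {y | ρ y x ≤ r}.Finite) (hjump : ∀ x y, w x y ≠ 0 → ρ x y ≤ R) (hR : 0 < R)
    {u : V → ℝ → ℝ}
    (hu : ∀ x, ∀ t ≤ 0, HasDerivWithinAt (u x) (graphLaplacian w m (fun y => u y t) x) (Iic 0) t) :
    R ^ 2 * (∫ t in Icc (-R ^ 2) 0,
        ∑ x ∈ (hball x₀ R).toFinset, carreDuChamp w m (fun y => u y t) x * m x)
      + R ^ 4 * ∫ t in Icc (-R ^ 2) 0,
        ∑ x ∈ (hball x₀ R).toFinset, graphLaplacian w m (fun y => u y t) x ^ 2 * m x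
      ≤ 15 * ∫ t in Icc (-(4 * R ^ 2)) 0,
        ∑ x ∈ (hball x₀ (9 * R)).toFinset, u x t ^ 2 * m x := by
  have hB : ∀ x ∈ (hball x₀ R).toFinset, ρ x x₀ ≤ R := fun x hx => (hball x₀ R).mem_toFinset.1 hx
  have hlt : ∀ {r x}, ballCutoff ρ x₀ R r x ≠ 0 → ρ x x₀ < r := lt_of_ballCutoff_ne_zero hR
  have hnest : ∀ x, ballCutoff ρ x₀ R (2 * R) x ≠ 0 → ballCutoff ρ x₀ R (4 * R) x = 1 :=
    fun x hx => ballCutoff_eq_one hR (by linarith [hlt hx])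
  simp only [fun t => Finset.sum_congr rfl fun x hx =>
    hG.carreDuChamp_mul_eq hball hjump (r := 9 * R) (by linarith [hB x hx]) fun y => u y t,
    ← Finset.mul_sum]
  refine (hG.isIntrinsicOn _).caccioppoli hR (isCutoff_ballCutoff hR hG.dist_symm hG.dist_triangle)
    (isCutoff_ballCutoff hR hG.dist_symm hG.dist_triangle) hnest (fun x _ y _ hw hne => ?_)
    (fun x hx => (hball x₀ (9 * R)).mem_toFinset.2 (show ρ x x₀ ≤ 9 * R by linarith [hB x hx]))
    (fun x hx => ballCutoff_eq_one (r := 2 * R) hR (by linarith [hB x hx])) hu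
    (hG.continuousOn_graphLaplacian fun x t ht => (hu x t ht).continuousWithinAt)
    (fun x _ hx t _ => hG.mul_graphLaplacian_eq hball hjump (by linarith [hlt hx]) _)
  by_cases hx : ballCutoff ρ x₀ R (2 * R) x = 0
  · exact ballCutoff_eq_one_of_ne_zero hR hG.dist_triangle (hjump x y hw) (by linarith)
      fun hy => hne (hx.trans hy.symm)
  · exact hnest x hx

end IsIntrinsicGraph

end WeightedGraph

/-- Parabolic Caccioppoli inequality on graphs with unbounded Laplacians: there is a universal
constant C such that for any weighted graph with an intrinsic metric with finite balls and jump
size s, any ancient solution u of ∂_t u = Δu and any R ≥ s,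
R² ∫_{Q_R} Γ(u) + R⁴ ∫_{Q_R} (∂_t u)² ≤ C ∫_{Q_{9R}} u². -/
theorem parabolic_caccioppoli :
    ∃ C : ℝ, 0 < C ∧
    ∀ (V : Type) (w : V → V → ℝ) (m : V → ℝ) (ρ : V → V → ℝ) (x₀ : V) (s : ℝ),
      (∀ x y, w x y = w y x) → (∀ x y, 0 ≤ w x y) →
      (∀ x, {y | w x y ≠ 0}.Finite) → (∀ x, 0 < m x) →
      (∀ x y, ρ x y = ρ y x) → (∀ x y, 0 ≤ ρ x y) → (∀ x, ρ x x = 0) →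
      (∀ x y z, ρ x z ≤ ρ x y + ρ y z) →
      (∀ x, ∑ᶠ y : V, w x y * ρ x y ^ 2 ≤ m x) →
      ∀ hball : ∀ (x : V) (r : ℝ), {y | ρ y x ≤ r}.Finite,
      (∀ x y, w x y ≠ 0 → ρ x y ≤ s) →
      ∀ u : V → ℝ → ℝ,
        (∀ x t, t ≤ 0 →
          HasDerivWithinAt (u x) ((∑ᶠ y : V, w x y * (u y t - u x t)) / m x) (Set.Iic 0) t) →
      ∀ R : ℝ, s ≤ R →
        R ^ 2 * (∫ t in Set.Icc (-R ^ 2) (0 : ℝ),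
            ∑ x ∈ (hball x₀ R).toFinset,
              ((1 / (2 * m x)) * ∑ᶠ y : V, w x y * (u y t - u x t) ^ 2) * m x)
        + R ^ 4 * (∫ t in Set.Icc (-R ^ 2) (0 : ℝ),
            ∑ x ∈ (hball x₀ R).toFinset,
              ((∑ᶠ y : V, w x y * (u y t - u x t)) / m x) ^ 2 * m x)
        ≤ C * ∫ t in Set.Icc (-(9 * R) ^ 2) (0 : ℝ),
            ∑ x ∈ (hball x₀ (9 * R)).toFinset, (u x t) ^ 2 * m x := by
  refine ⟨15, by norm_num, fun V w m ρ x₀ s hw hw0 hwfin hm hρs hρ0 _ hρtri hintr hball hjump u hu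
    R hsR => ?_⟩
  have hM0 : ∀ t, 0 ≤ ∑ x ∈ (hball x₀ (9 * R)).toFinset, u x t ^ 2 * m x := fun t =>
    Finset.sum_nonneg fun x _ => mul_nonneg (sq_nonneg _) (hm x).le
  have hJ0 : 0 ≤ ∫ t in Icc (-(9 * R) ^ 2) 0, ∑ x ∈ (hball x₀ (9 * R)).toFinset, u x t ^ 2 * m x :=
    setIntegral_nonneg measurableSet_Icc fun t _ => hM0 t
  rcases lt_trichotomy R 0 with hR | rfl | hR
  · have hB : (hball x₀ R).toFinset = ∅ := Finset.eq_empty_of_forall_notMem fun y hy =>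
      absurd ((hball x₀ R).mem_toFinset.1 hy) (not_le.2 (hR.trans_le (hρ0 y x₀)))
    simp only [hB, Finset.sum_empty, integral_zero, mul_zero, add_zero]
    exact mul_nonneg (by norm_num) hJ0
  · simp only [ne_eq, OfNat.ofNat_ne_zero, not_false_eq_true, zero_pow, zero_mul, add_zero]
    exact mul_nonneg (by norm_num) hJ0
  · have hG : IsIntrinsicGraph w m ρ := ⟨hw, hw0, hwfin, hm, hρs, hρtri, hintr⟩
    have huc : ∀ x, ContinuousOn (u x) (Icc (-(9 * R) ^ 2) 0) := fun x t ht =>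
      (hu x t ht.2).continuousWithinAt.mono Icc_subset_Iic_self
    refine (hG.caccioppoli_ball hball (fun x y h => (hjump x y h).trans hsR) hR hu).trans ?_
    refine mul_le_mul_of_nonneg_left (setIntegral_Icc_mono_set (continuousOn_finsetSum _
      fun x _ => ((huc x).pow 2).mul continuousOn_const) (fun t _ => hM0 t) ?_ le_rfl) (by norm_num)
    nlinarith
end

section
/- Gradient Caccioppoli estimate: there is a universal constant C such that for any ancient solution u of ∂_t u = Δu on V × (−∞, 0] and any R ≥ s, ∫_{Q_R} Γ(u) ≤ (C/R²)·∫_{Q_{3R}} u². -/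
open scoped BigOperators
open MeasureTheory Set

/-!
Test the heat equation against `φ² u`, where `φ = 1` on `B_R`, `φ = 0` off `B_{2R}`, and `φ` is
`1/R`-Lipschitz for `ρ`. Because jumps have size `s ≤ R`, every neighbour of the support of `φ`
lies in `B_{3R}`, so summation by parts and Young's inequality give
`d/dt ∑ φ² u² m ≤ -∑ φ² Γ(u) m + 2 ∑_y w_{xy} (φ(y) - φ(x))² u(x)²`, and the intrinsic-metric
condition `∑_y w_{xy} ρ(x,y)² ≤ m_x` bounds the last term by `(2/R²) ∑_{B_{3R}} u² m`.
Integrating from `t₀ ∈ [-2R², -R²]` to `0` and averaging over `t₀` gives the estimate with `C = 3`.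
-/

theorem integral_le_add_of_hasDerivWithinAt_le {E e T G : ℝ → ℝ} {a c : ℝ} (ha : a ≤ 0)
    (hE : ∀ t ≤ 0, HasDerivWithinAt E (e t) (Iic 0) t) (he : ∀ t ≤ 0, e t ≤ c * G t - T t)
    (hT : ContinuousOn T (Iic 0)) (hG : ContinuousOn G (Iic 0)) (hE0 : 0 ≤ E 0) :
    ∫ t in a..0, T t ≤ E a + c * ∫ t in a..0, G t := by
  have hIcc : Icc a 0 ⊆ Iic 0 := fun _ ht => ht.2
  have ftc : E 0 - E a ≤ ∫ t in a..0, (c * G t - T t) :=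
    intervalIntegral.sub_le_integral_of_hasDeriv_right_of_le ha
      (fun t ht => (hE t ht.2).continuousWithinAt.mono hIcc)
      (fun t ht => ((hE t ht.2.le).hasDerivAt (Iic_mem_nhds ht.2)).hasDerivWithinAt)
      (((continuousOn_const.mul hG).sub hT).mono hIcc).integrableOn_Icc
      (fun t ht => he t ht.2.le)
  rw [intervalIntegral.integral_sub (((hG.mono hIcc).intervalIntegrable_of_Icc ha).const_mul c)
    ((hT.mono hIcc).intervalIntegrable_of_Icc ha), intervalIntegral.integral_const_mul] at ftc
  linarith

theorem integral_Icc_le_of_hasDerivWithinAt_le {E e T G : ℝ → ℝ} {c r σ : ℝ} (hc : 0 ≤ c)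
    (hr : 0 < r) (hσ : σ ≤ -(2 * r))
    (hE : ∀ t ≤ 0, HasDerivWithinAt E (e t) (Iic 0) t) (he : ∀ t ≤ 0, e t ≤ c * G t - T t)
    (hT : ContinuousOn T (Iic 0)) (hG : ContinuousOn G (Iic 0)) (hE0 : 0 ≤ E 0)
    (hEG : ∀ t ≤ 0, E t ≤ G t) (hT0 : ∀ t ≤ 0, 0 ≤ T t) (hG0 : ∀ t ≤ 0, 0 ≤ G t) :
    ∫ t in Icc (-r) 0, T t ≤ (c + 1 / r) * ∫ t in Icc σ 0, G t := by
  have hintegrable : ∀ f : ℝ → ℝ, ContinuousOn f (Iic 0) → ∀ a b : ℝ, a ≤ b → b ≤ 0 →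
      IntervalIntegrable f volume a b := fun f hf a b hab hb =>
    (hf.mono fun _ ht => ht.2.trans hb).intervalIntegrable_of_Icc hab
  have hmono : ∀ f : ℝ → ℝ, ContinuousOn f (Iic 0) → (∀ t ≤ 0, 0 ≤ f t) → ∀ a b d : ℝ,
      a ≤ b → b ≤ d → d ≤ 0 → ∫ t in b..d, f t ≤ ∫ t in a..0, f t := by
    intro f hf hf0 a b d hab hbd hd
    refine intervalIntegral.integral_mono_interval hab hbd hd ?_
      (hintegrable f hf a 0 (hab.trans (hbd.trans hd)) le_rfl)
    filter_upwards [ae_restrict_mem measurableSet_Ioc] with t ht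
    exact hf0 t ht.2
  have hr0 : -r ≤ 0 := by linarith
  have hr2 : -(2 * r) ≤ -r := by linarith
  have key : ∀ t₀ ∈ Icc (-(2 * r)) (-r),
      ∫ t in (-r)..0, T t ≤ E t₀ + c * ∫ t in σ..0, G t := fun t₀ ht₀ => by
    have ht₀0 : t₀ ≤ 0 := ht₀.2.trans hr0
    linarith [integral_le_add_of_hasDerivWithinAt_le ht₀0 hE he hT hG hE0,
      hmono T hT hT0 _ _ _ ht₀.2 hr0 le_rfl,
      mul_le_mul_of_nonneg_left (hmono G hG hG0 _ _ _ (hσ.trans ht₀.1) ht₀0 le_rfl) hc]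
  have hEint : IntervalIntegrable E volume (-(2 * r)) (-r) :=
    hintegrable E (fun t ht => (hE t ht).continuousWithinAt) _ _ hr2 hr0
  have avg : r * ∫ t in (-r)..0, T t ≤
      (∫ t in (-(2 * r))..(-r), E t) + r * (c * ∫ t in σ..0, G t) := by
    have h := intervalIntegral.integral_mono_on hr2 intervalIntegrable_const
      (hEint.add intervalIntegrable_const) key
    rw [intervalIntegral.integral_add hEint intervalIntegrable_const,
      intervalIntegral.integral_const, intervalIntegral.integral_const, smul_eq_mul,
      smul_eq_mul, show -r - -(2 * r) = r by ring] at h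
    linarith
  have hEG' : ∫ t in (-(2 * r))..(-r), E t ≤ ∫ t in σ..0, G t :=
    (intervalIntegral.integral_mono_on hr2 hEint (hintegrable G hG _ _ hr2 hr0)
      fun t ht => hEG t (ht.2.trans hr0)).trans (hmono G hG hG0 _ _ _ hσ hr2 hr0)
  rw [integral_Icc_eq_integral_Ioc, integral_Icc_eq_integral_Ioc,
    ← intervalIntegral.integral_of_le hr0,
    ← intervalIntegral.integral_of_le (hσ.trans (by linarith)),
    ← mul_le_mul_iff_right₀ hr]
  calc r * ∫ t in (-r)..0, T t ≤ (∫ t in σ..0, G t) + r * (c * ∫ t in σ..0, G t) := by linarith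
    _ = r * ((c + 1 / r) * ∫ t in σ..0, G t) := by field_simp; ring

-- `q²b - p²a = (p² + q²)(b - a)/2 + (a + b)(q + p)(q - p)/2`, and Young's inequality
-- `-XY ≤ X²/4 + Y²` absorbs the cross term.
theorem two_mul_sq_mul_sub_add_le (p q a b : ℝ) :
    2 * p ^ 2 * a * (b - a) + 2 * q ^ 2 * b * (a - b) ≤
      (-(p ^ 2 * (b - a) ^ 2) / 2 + 2 * a ^ 2 * (q - p) ^ 2) +
        (-(q ^ 2 * (a - b) ^ 2) / 2 + 2 * b ^ 2 * (p - q) ^ 2) := by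
  linarith [sq_nonneg ((q + p) * (b - a) + 2 * (a + b) * (q - p)),
    mul_self_nonneg ((q - p) * (a - b))]

theorem Finset.sum_sum_mul_le_of_symm {V : Type*} (F : Finset V) {w A B : V → V → ℝ}
    (hw : ∀ x y, w x y = w y x) (hw0 : ∀ x y, 0 ≤ w x y)
    (h : ∀ x y, A x y + A y x ≤ B x y + B y x) :
    ∑ x ∈ F, ∑ y ∈ F, w x y * A x y ≤ ∑ x ∈ F, ∑ y ∈ F, w x y * B x y := by
  have symmetrize : ∀ C : V → V → ℝ, 2 * ∑ x ∈ F, ∑ y ∈ F, w x y * C x y =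
      ∑ x ∈ F, ∑ y ∈ F, w x y * (C x y + C y x) := by
    intro C
    rw [two_mul]
    nth_rewrite 2 [Finset.sum_comm]
    rw [← Finset.sum_add_distrib]
    refine Finset.sum_congr rfl fun x _ => ?_
    rw [← Finset.sum_add_distrib]
    refine Finset.sum_congr rfl fun y _ => ?_
    rw [hw y x]
    ring
  have := Finset.sum_le_sum fun x (_ : x ∈ F) => Finset.sum_le_sum fun y (_ : y ∈ F) =>
    mul_le_mul_of_nonneg_left (h x y) (hw0 x y)
  linarith [symmetrize A, symmetrize B]

theorem Finset.sum_le_finsum_of_nonneg {α : Type*} {f : α → ℝ} (hf : ∀ y, 0 ≤ f y)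
    (hfin : (Function.support f).Finite) (F : Finset α) : ∑ y ∈ F, f y ≤ ∑ᶠ y, f y := by
  classical
  rw [finsum_eq_sum_of_support_subset f (s := F ∪ hfin.toFinset) (by simp)]
  exact Finset.sum_le_sum_of_subset_of_nonneg Finset.subset_union_left fun y _ _ => hf y

noncomputable def cutoff (R r : ℝ) : ℝ :=
  projIcc 0 1 zero_le_one ((2 * R - r) / R)

theorem cutoff_mem_Icc (R r : ℝ) : cutoff R r ∈ Icc (0 : ℝ) 1 :=
  Subtype.prop _

theorem cutoff_of_le {R r : ℝ} (hR : 0 < R) (h : r ≤ R) : cutoff R r = 1 := by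
  rw [cutoff, projIcc_of_right_le _ ((le_div_iff₀ hR).2 (by linarith))]

theorem cutoff_of_two_mul_le {R r : ℝ} (hR : 0 < R) (h : 2 * R ≤ r) : cutoff R r = 0 := by
  rw [cutoff, projIcc_of_le_left _ (div_nonpos_of_nonpos_of_nonneg (by linarith) hR.le)]

theorem abs_cutoff_sub_cutoff_le {R : ℝ} (hR : 0 < R) (a b : ℝ) :
    |cutoff R a - cutoff R b| ≤ |a - b| / R := by
  refine (abs_projIcc_sub_projIcc zero_le_one).trans_eq ?_
  rw [← sub_div, abs_div, abs_of_pos hR, abs_sub_comm]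
  ring_nf

namespace WeightedGraph

variable {V : Type*} {w : V → V → ℝ} {m : V → ℝ}

noncomputable def laplacian (w : V → V → ℝ) (m f : V → ℝ) (x : V) : ℝ :=
  (∑ᶠ y, w x y * (f y - f x)) / m x

noncomputable def carreDuChamp (w : V → V → ℝ) (m f : V → ℝ) (x : V) : ℝ :=
  1 / (2 * m x) * ∑ᶠ y, w x y * (f y - f x) ^ 2

theorem finsum_mul_eq_sum {F : Finset V} {x : V} (hF : ∀ y, w x y ≠ 0 → y ∈ F) (g : V → ℝ) :
    ∑ᶠ y, w x y * g y = ∑ y ∈ F, w x y * g y :=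
  finsum_eq_sum_of_support_subset _ fun y hy => hF y (left_ne_zero_of_mul hy)

theorem sum_mul_sq_sub_le_of_lipschitz {ρ : V → V → ℝ} {f : V → ℝ} {L : ℝ} {x : V}
    (hw0 : ∀ y, 0 ≤ w x y) (hfin : {y | w x y ≠ 0}.Finite)
    (hρ : ∑ᶠ y, w x y * ρ x y ^ 2 ≤ m x) (hf : ∀ y, |f y - f x| ≤ L * ρ x y) (F : Finset V) :
    ∑ y ∈ F, w x y * (f y - f x) ^ 2 ≤ L ^ 2 * m x := by
  have hsq : ∀ y, (f y - f x) ^ 2 ≤ L ^ 2 * ρ x y ^ 2 := fun y => by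
    rw [← mul_pow, ← sq_abs]
    exact pow_le_pow_left₀ (abs_nonneg _) (hf y) 2
  calc ∑ y ∈ F, w x y * (f y - f x) ^ 2 ≤ L ^ 2 * ∑ y ∈ F, w x y * ρ x y ^ 2 := by
        rw [Finset.mul_sum]
        exact Finset.sum_le_sum fun y _ => by nlinarith [mul_le_mul_of_nonneg_left (hsq y) (hw0 y)]
    _ ≤ L ^ 2 * ∑ᶠ y, w x y * ρ x y ^ 2 :=
        mul_le_mul_of_nonneg_left (Finset.sum_le_finsum_of_nonneg
          (fun y => mul_nonneg (hw0 y) (sq_nonneg _))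
          (hfin.subset fun _ hy => left_ne_zero_of_mul hy) F) (sq_nonneg L)
    _ ≤ L ^ 2 * m x := mul_le_mul_of_nonneg_left hρ (sq_nonneg L)

theorem sum_mul_sq_cutoff_sub_le {ρ : V → V → ℝ} {R : ℝ} {x : V} (hR : 0 < R)
    (hρ : ∀ x y, ρ x y = ρ y x) (hρtri : ∀ x y z, ρ x z ≤ ρ x y + ρ y z)
    (hw0 : ∀ y, 0 ≤ w x y) (hfin : {y | w x y ≠ 0}.Finite)
    (hρm : ∑ᶠ y, w x y * ρ x y ^ 2 ≤ m x) (x₀ : V) (F : Finset V) :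
    ∑ y ∈ F, w x y * (cutoff R (ρ y x₀) - cutoff R (ρ x x₀)) ^ 2 ≤ (1 / R) ^ 2 * m x := by
  refine sum_mul_sq_sub_le_of_lipschitz hw0 hfin hρm (fun y => ?_) F
  have hdist : |ρ y x₀ - ρ x x₀| ≤ ρ x y := abs_sub_le_iff.2
    ⟨by linarith [hρtri y x x₀, hρ x y], by linarith [hρtri x y x₀]⟩
  refine (abs_cutoff_sub_cutoff_le hR _ _).trans ?_
  rw [one_div_mul_eq_div]
  gcongr

theorem sum_sq_mul_laplacian_le {φ f : V → ℝ} {F : Finset V} {κ : ℝ}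
    (hw : ∀ x y, w x y = w y x) (hw0 : ∀ x y, 0 ≤ w x y) (hm : ∀ x, m x ≠ 0)
    (hF : ∀ x, φ x ≠ 0 → ∀ y, w x y ≠ 0 → y ∈ F)
    (hφ : ∀ x, ∑ y ∈ F, w x y * (φ y - φ x) ^ 2 ≤ κ * m x) :
    ∑ x ∈ F, φ x ^ 2 * (2 * f x * laplacian w m f x) * m x ≤
      2 * κ * ∑ x ∈ F, f x ^ 2 * m x - ∑ x ∈ F, φ x ^ 2 * carreDuChamp w m f x * m x := by
  have hΔ : ∀ x, φ x ^ 2 * (2 * f x * laplacian w m f x) * m x =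
      ∑ y ∈ F, w x y * (2 * φ x ^ 2 * f x * (f y - f x)) := by
    intro x
    by_cases hx : φ x = 0
    · simp [hx]
    calc _ = 2 * φ x ^ 2 * f x * ∑ y ∈ F, w x y * (f y - f x) := by
          rw [laplacian, finsum_mul_eq_sum (hF x hx)]
          field_simp [hm x]
      _ = _ := by
          rw [Finset.mul_sum]
          exact Finset.sum_congr rfl fun y _ => by ring
  have hΓ : ∀ x, φ x ^ 2 * carreDuChamp w m f x * m x =
      (∑ y ∈ F, w x y * (φ x ^ 2 * (f y - f x) ^ 2)) / 2 := by
    intro x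
    by_cases hx : φ x = 0
    · simp [hx]
    calc _ = φ x ^ 2 * (∑ y ∈ F, w x y * (f y - f x) ^ 2) / 2 := by
          rw [carreDuChamp, finsum_mul_eq_sum (hF x hx)]
          field_simp [hm x]
      _ = _ := by
          rw [Finset.mul_sum]
          exact congrArg (· / 2) (Finset.sum_congr rfl fun y _ => by ring)
  have hB : ∀ x, ∑ y ∈ F, w x y * (-(φ x ^ 2 * (f y - f x) ^ 2) / 2 + 2 * f x ^ 2 * (φ y - φ x) ^ 2)
      = 2 * f x ^ 2 * ∑ y ∈ F, w x y * (φ y - φ x) ^ 2 - φ x ^ 2 * carreDuChamp w m f x * m x := by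
    intro x
    rw [hΓ, Finset.mul_sum, Finset.sum_div, ← Finset.sum_sub_distrib]
    exact Finset.sum_congr rfl fun y _ => by ring
  calc ∑ x ∈ F, φ x ^ 2 * (2 * f x * laplacian w m f x) * m x
      = ∑ x ∈ F, ∑ y ∈ F, w x y * (2 * φ x ^ 2 * f x * (f y - f x)) :=
        Finset.sum_congr rfl fun x _ => hΔ x
    _ ≤ ∑ x ∈ F, ∑ y ∈ F, w x y *
          (-(φ x ^ 2 * (f y - f x) ^ 2) / 2 + 2 * f x ^ 2 * (φ y - φ x) ^ 2) :=
        F.sum_sum_mul_le_of_symm hw hw0 fun x y => two_mul_sq_mul_sub_add_le (φ x) (φ y) (f x) (f y)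
    _ ≤ ∑ x ∈ F, (2 * κ * (f x ^ 2 * m x) - φ x ^ 2 * carreDuChamp w m f x * m x) :=
        Finset.sum_le_sum fun x _ => by
          rw [hB]
          nlinarith [mul_le_mul_of_nonneg_left (hφ x) (sq_nonneg (f x))]
    _ = _ := by rw [Finset.sum_sub_distrib, Finset.mul_sum]

theorem carreDuChamp_nonneg (hw0 : ∀ x y, 0 ≤ w x y) (hm : ∀ x, 0 < m x) (f : V → ℝ) (x : V) :
    0 ≤ carreDuChamp w m f x :=
  mul_nonneg (by have := hm x; positivity)
    (finsum_nonneg fun y => mul_nonneg (hw0 x y) (sq_nonneg _))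

theorem continuousOn_carreDuChamp {u : V → ℝ → ℝ} {s : Set ℝ} (hwfin : ∀ x, {y | w x y ≠ 0}.Finite)
    (hu : ∀ x, ContinuousOn (u x) s) (x : V) :
    ContinuousOn (fun t => carreDuChamp w m (u · t) x) s := by
  simp only [carreDuChamp,
    finsum_mul_eq_sum (F := (hwfin x).toFinset) fun y hy => by simpa using hy]
  fun_prop

theorem integral_sum_carreDuChamp_le {u : V → ℝ → ℝ} {B F : Finset V} {φ : V → ℝ} {κ r σ : ℝ}
    (hw : ∀ x y, w x y = w y x) (hw0 : ∀ x y, 0 ≤ w x y) (hwfin : ∀ x, {y | w x y ≠ 0}.Finite)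
    (hm : ∀ x, 0 < m x)
    (hu : ∀ x t, t ≤ 0 → HasDerivWithinAt (u x) (laplacian w m (u · t) x) (Iic 0) t)
    (hBF : B ⊆ F) (hφB : ∀ x ∈ B, φ x = 1) (hφ : ∀ x, φ x ^ 2 ≤ 1)
    (hF : ∀ x, φ x ≠ 0 → ∀ y, w x y ≠ 0 → y ∈ F)
    (hφgrad : ∀ x, ∑ y ∈ F, w x y * (φ y - φ x) ^ 2 ≤ κ * m x) (hκ : 0 ≤ κ) (hr : 0 < r)
    (hσ : σ ≤ -(2 * r)) :
    ∫ t in Icc (-r) 0, ∑ x ∈ B, carreDuChamp w m (u · t) x * m x ≤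
      (2 * κ + 1 / r) * ∫ t in Icc σ 0, ∑ x ∈ F, u x t ^ 2 * m x := by
  have hucont : ∀ x, ContinuousOn (u x) (Iic 0) := fun x t ht => (hu x t ht).continuousWithinAt
  have hΓ0 := carreDuChamp_nonneg hw0 hm
  have hTterm : ∀ t x, 0 ≤ φ x ^ 2 * carreDuChamp w m (u · t) x * m x := fun t x =>
    mul_nonneg (mul_nonneg (sq_nonneg _) (hΓ0 _ x)) (hm x).le
  have hGterm : ∀ t x, 0 ≤ u x t ^ 2 * m x := fun t x => mul_nonneg (sq_nonneg _) (hm x).le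
  have hTcont : ContinuousOn
      (fun t => ∑ x ∈ F, φ x ^ 2 * carreDuChamp w m (u · t) x * m x) (Iic 0) :=
    continuousOn_finsetSum _ fun x _ =>
      (continuousOn_const.mul (continuousOn_carreDuChamp hwfin hucont x)).mul continuousOn_const
  calc ∫ t in Icc (-r) 0, ∑ x ∈ B, carreDuChamp w m (u · t) x * m x
      ≤ ∫ t in Icc (-r) 0, ∑ x ∈ F, φ x ^ 2 * carreDuChamp w m (u · t) x * m x := by
        refine setIntegral_mono_of_nonneg (fun t _ => Finset.sum_nonneg fun x _ =>
          mul_nonneg (hΓ0 _ x) (hm x).le) (fun t _ => ?_)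
          (hTcont.mono fun _ ht => ht.2).integrableOn_Icc
        calc ∑ x ∈ B, carreDuChamp w m (u · t) x * m x
            = ∑ x ∈ B, φ x ^ 2 * carreDuChamp w m (u · t) x * m x :=
              Finset.sum_congr rfl fun x hx => by rw [hφB x hx]; ring
          _ ≤ _ := Finset.sum_le_sum_of_subset_of_nonneg hBF fun x _ _ => hTterm t x
    _ ≤ (2 * κ + 1 / r) * ∫ t in Icc σ 0, ∑ x ∈ F, u x t ^ 2 * m x := by
        refine integral_Icc_le_of_hasDerivWithinAt_le
          (E := fun t => ∑ x ∈ F, φ x ^ 2 * u x t ^ 2 * m x)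
          (mul_nonneg zero_le_two hκ) hr hσ (fun t ht => ?_)
          (fun t _ => sum_sq_mul_laplacian_le hw hw0 (fun x => (hm x).ne') hF hφgrad)
          hTcont (continuousOn_finsetSum _ fun x _ => ((hucont x).pow 2).mul continuousOn_const)
          (Finset.sum_nonneg fun x _ => by have := hm x; positivity)
          (fun t _ => Finset.sum_le_sum fun x _ => ?_)
          (fun t _ => Finset.sum_nonneg fun x _ => hTterm t x)
          (fun t _ => Finset.sum_nonneg fun x _ => hGterm t x)
        · exact (HasDerivWithinAt.fun_sum fun x _ =>
            (((hu x t ht).pow 2).const_mul (φ x ^ 2)).mul_const (m x)).congr_deriv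
            (Finset.sum_congr rfl fun x _ => by ring)
        · linarith [mul_le_mul_of_nonneg_right (hφ x) (hGterm t x)]

end WeightedGraph

/-- Gradient Caccioppoli estimate: there is a universal constant C such that for any weighted
graph with an intrinsic metric with finite balls and jump size s, any ancient solution u of
∂_t u = Δu and any R ≥ s, ∫_{Q_R} Γ(u) ≤ (C/R²) ∫_{Q_{3R}} u². -/
theorem gradient_caccioppoli :
    ∃ C : ℝ, 0 < C ∧
    ∀ (V : Type) (w : V → V → ℝ) (m : V → ℝ) (ρ : V → V → ℝ) (x₀ : V) (s : ℝ),
      (∀ x y, w x y = w y x) → (∀ x y, 0 ≤ w x y) →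
      (∀ x, {y | w x y ≠ 0}.Finite) → (∀ x, 0 < m x) →
      (∀ x y, ρ x y = ρ y x) → (∀ x y, 0 ≤ ρ x y) → (∀ x, ρ x x = 0) →
      (∀ x y z, ρ x z ≤ ρ x y + ρ y z) →
      (∀ x, ∑ᶠ y : V, w x y * ρ x y ^ 2 ≤ m x) →
      ∀ hball : ∀ (x : V) (r : ℝ), {y | ρ y x ≤ r}.Finite,
      (∀ x y, w x y ≠ 0 → ρ x y ≤ s) →
      ∀ u : V → ℝ → ℝ,
        (∀ x t, t ≤ 0 →
          HasDerivWithinAt (u x) ((∑ᶠ y : V, w x y * (u y t - u x t)) / m x) (Set.Iic 0) t) →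
      ∀ R : ℝ, s ≤ R →
        (∫ t in Set.Icc (-R ^ 2) (0 : ℝ),
            ∑ x ∈ (hball x₀ R).toFinset,
              ((1 / (2 * m x)) * ∑ᶠ y : V, w x y * (u y t - u x t) ^ 2) * m x)
        ≤ (C / R ^ 2) * ∫ t in Set.Icc (-(3 * R) ^ 2) (0 : ℝ),
            ∑ x ∈ (hball x₀ (3 * R)).toFinset, (u x t) ^ 2 * m x := by
  refine ⟨3, by norm_num, ?_⟩
  intro V w m ρ x₀ s hw hw0 hwfin hm hρ hρ0 _ hρtri hρint hball hjump u hu R hsR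
  rcases lt_or_ge 0 R with hR | hR
  · have hF : ∀ x, cutoff R (ρ x x₀) ≠ 0 → ∀ y, w x y ≠ 0 → y ∈ (hball x₀ (3 * R)).toFinset := by
      intro x hx y hxy
      have : ρ x x₀ < 2 * R := lt_of_not_ge fun h => hx (cutoff_of_two_mul_le hR h)
      simp only [Set.Finite.mem_toFinset, mem_ofPred_eq]
      linarith [hρtri y x x₀, hρ x y, hjump x y hxy]
    refine (WeightedGraph.integral_sum_carreDuChamp_le (B := (hball x₀ R).toFinset)
      (φ := fun x => cutoff R (ρ x x₀)) (r := R ^ 2) (σ := -(3 * R) ^ 2) hw hw0 hwfin hm hu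
      (fun x hx => by simp only [Set.Finite.mem_toFinset, mem_ofPred_eq] at hx ⊢; linarith)
      (fun x hx => cutoff_of_le hR (by simpa using hx))
      (fun x => pow_le_one₀ (cutoff_mem_Icc _ _).1 (cutoff_mem_Icc _ _).2) hF
      (fun x => WeightedGraph.sum_mul_sq_cutoff_sub_le hR hρ hρtri (hw0 x) (hwfin x) (hρint x) x₀ _)
      (sq_nonneg _) (by positivity) (by nlinarith)).trans_eq ?_
    ring
  -- For `R ≤ 0` the left side vanishes: the ball is empty, or the time interval is a point.
  · refine (le_of_eq ?_).trans (mul_nonneg (by positivity) (setIntegral_nonneg measurableSet_Icc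
      fun t _ => Finset.sum_nonneg fun x _ => mul_nonneg (sq_nonneg _) (hm x).le))
    rcases hR.lt_or_eq with hR | rfl
    · have : (hball x₀ R).toFinset = ∅ := Finset.eq_empty_of_forall_notMem fun x hx => by
        simp only [Set.Finite.mem_toFinset, mem_ofPred_eq] at hx
        linarith [hρ0 x x₀]
      simp [this]
    · simp
end
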